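/- arXiv:2106.09605 — 3 statements merged into one kernel-verified Lean document; each statement's English description precedes it below -/
import Mathlib

section
/- With the convention F[g](ξ) = (2π)^{-1/2} ∫ e^{-ixξ} g(x) dx, the Fourier transform of x ↦ 3·sech(x)³·tanh(x)² equals ξ ↦ −(1/8)·√(π/2)·(ξ²−3)(ξ²+1)·sech(πξ/2). In particular it vanishes at ξ = ±√3. -/
open Real Complex MeasureTheory


lemma gamma_combo (ξ : ℝ) :
    Complex.Gamma (3/2 + (ξ:ℂ)*Complex.I/2) * Complex.Gamma (3/2 - (ξ:ℂ)*Complex.I/2)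
      = (Real.pi : ℂ) * (1 + ξ^2) / (4 * Real.cosh (Real.pi * ξ / 2)) := by
  set v : ℂ := (ξ:ℂ)*Complex.I/2 with hv
  have h1 : (3/2 + v : ℂ) = (1/2 + v) + 1 := by ring
  have h2 : (3/2 - v : ℂ) = (1/2 - v) + 1 := by ring
  have hz1 : (1/2 + v : ℂ) ≠ 0 := by
    intro h
    have := congrArg Complex.re h
    simp [hv, Complex.add_re, Complex.div_re, Complex.mul_re] at this
  have hz2 : (1/2 - v : ℂ) ≠ 0 := by
    intro h
    have := congrArg Complex.re h
    simp [hv, Complex.sub_re, Complex.div_re, Complex.mul_re] at this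
  rw [h1, h2, Complex.Gamma_add_one _ hz1, Complex.Gamma_add_one _ hz2]
  have hrefl : Complex.Gamma (1/2 + v) * Complex.Gamma (1/2 - v)
      = (Real.pi : ℂ) / Complex.sin (Real.pi * (1/2 + v)) := by
    have := Complex.Gamma_mul_Gamma_one_sub (1/2 + v)
    rwa [(by ring : (1 : ℂ) - (1/2 + v) = 1/2 - v)] at this
  have hsin : Complex.sin ((Real.pi : ℂ) * (1/2 + v)) = (Real.cosh (Real.pi * ξ / 2) : ℂ) := by
    have e1 : (Real.pi : ℂ) * (1/2 + v) = (Real.pi:ℂ)/2 - (-((Real.pi * ξ / 2 : ℝ) : ℂ) * Complex.I) := by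
      rw [hv]; push_cast; ring
    rw [e1, Complex.sin_pi_div_two_sub, neg_mul, Complex.cos_neg]
    have := Complex.cosh_mul_I (((Real.pi * ξ / 2 : ℝ) : ℂ) * Complex.I)
    rw [mul_assoc, Complex.I_mul_I, mul_neg_one, Complex.cosh_neg] at this
    rw [← this, Complex.ofReal_cosh]
  rw [mul_mul_mul_comm, hrefl, hsin]
  have hcosh : (Real.cosh (Real.pi * ξ / 2) : ℂ) ≠ 0 :=
    Complex.ofReal_ne_zero.mpr (Real.cosh_pos _).ne'
  have hq : ((1:ℂ)/2 + v) * (1/2 - v) = (1 + (ξ:ℂ)^2)/4 := by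
    rw [hv]; linear_combination (-(ξ:ℂ)^2/4) * Complex.I_sq
  rw [hq]
  field_simp

lemma beta_eval (ξ : ℝ) :
    (∫ y in (0:ℝ)..1, (y:ℂ)^((3:ℂ)/2 + (ξ:ℂ)*Complex.I/2 - 1)
        * (1 - (y:ℂ))^((3:ℂ)/2 - (ξ:ℂ)*Complex.I/2 - 1) * (1 - 2*(y:ℂ))^2)
      = (Real.pi : ℂ) * (3 - ξ^2) * (1 + ξ^2) / (96 * Real.cosh (Real.pi * ξ / 2)) := by
  set v : ℂ := (ξ:ℂ)*Complex.I/2 with hv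
  have hvre : v.re = 0 := by simp [hv]
  set u : ℂ := 3/2 + v with hu
  set d : ℂ := 3/2 - v with hd
  have hure : u.re = 3/2 := by simp [hu, hvre]
  have hdre : d.re = 3/2 := by simp [hd, hvre]
  have hu0 : (0:ℝ) < u.re := by rw [hure]; norm_num
  have hu1 : (0:ℝ) < (u+1).re := by simp [Complex.add_re, hure]; norm_num
  have hu2 : (0:ℝ) < (u+2).re := by simp [Complex.add_re, hure]; norm_num
  have hd0 : (0:ℝ) < d.re := by rw [hdre]; norm_num
  -- the three beta integrands
  have heq : Set.EqOn
      (fun y : ℝ => (y:ℂ)^(u - 1) * (1 - (y:ℂ))^(d - 1) * (1 - 2*(y:ℂ))^2)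
      (fun y : ℝ => ((y:ℂ)^(u - 1) * (1 - (y:ℂ))^(d - 1)
        - 4 * ((y:ℂ)^(u + 1 - 1) * (1 - (y:ℂ))^(d - 1)))
        + 4 * ((y:ℂ)^(u + 2 - 1) * (1 - (y:ℂ))^(d - 1)))
      (Set.uIcc (0:ℝ) 1) := by
    intro y _
    rcases eq_or_ne (y:ℂ) 0 with h0 | h0
    · have hue : u - 1 ≠ 0 := by
        intro h; have := congrArg Complex.re h; rw [Complex.sub_re, hure] at this
        norm_num at this
      have hue1 : u + 1 - 1 ≠ 0 := by
        intro h; have := congrArg Complex.re h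
        rw [Complex.sub_re, Complex.add_re, hure] at this; norm_num at this
      have hue2 : u + 2 - 1 ≠ 0 := by
        intro h; have := congrArg Complex.re h
        rw [Complex.sub_re, Complex.add_re, hure] at this; norm_num at this
      have hun : u ≠ 0 := by
        intro h; have := congrArg Complex.re h; rw [hure] at this; norm_num at this
      simp [h0, Complex.zero_cpow, hue, hue1, hue2, hun]
    · have e1 : (y:ℂ)^(u + 1 - 1) = (y:ℂ)^(u-1) * (y:ℂ) := by
        rw [(by ring : u + 1 - 1 = (u-1) + 1), Complex.cpow_add _ _ h0, Complex.cpow_one]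
      have e2 : (y:ℂ)^(u + 2 - 1) = (y:ℂ)^(u-1) * (y:ℂ)^2 := by
        rw [(by ring : u + 2 - 1 = (u-1) + 2), Complex.cpow_add _ _ h0]
        norm_num [Complex.cpow_natCast]
      simp only [e1, e2]
      ring
  rw [intervalIntegral.integral_congr heq]
  have i0 := Complex.betaIntegral_convergent hu0 hd0
  have i1 := Complex.betaIntegral_convergent hu1 hd0
  have i2 := Complex.betaIntegral_convergent hu2 hd0
  rw [intervalIntegral.integral_add ((i0.sub (i1.const_mul 4))) (i2.const_mul 4),
      intervalIntegral.integral_sub i0 (i1.const_mul 4),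
      intervalIntegral.integral_const_mul, intervalIntegral.integral_const_mul]
  have hB : ∀ s : ℂ, 0 < s.re → Complex.Gamma (s + d) ≠ 0 →
      (∫ y in (0:ℝ)..1, (y:ℂ)^(s - 1) * (1 - (y:ℂ))^(d - 1))
        = Complex.Gamma s * Complex.Gamma d / Complex.Gamma (s + d) := by
    intro s hs hne
    have := Complex.Gamma_mul_Gamma_eq_betaIntegral hs hd0
    rw [Complex.betaIntegral] at this
    rw [eq_div_iff hne]
    linear_combination -this
  have hune : u ≠ 0 := by
    intro h; have := congrArg Complex.re h; rw [hure] at this; norm_num at this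
  have hu1ne : u + 1 ≠ 0 := by
    intro h; have := congrArg Complex.re h
    rw [Complex.add_re, hure] at this; norm_num at this
  have hG3 : Complex.Gamma (u + d) = 2 := by
    rw [(by rw [hu, hd]; ring : u + d = ((2:ℕ):ℂ) + 1), Complex.Gamma_nat_eq_factorial]
    norm_num [Nat.factorial]
  have hG4 : Complex.Gamma (u + 1 + d) = 6 := by
    rw [(by rw [hu, hd]; ring : u + 1 + d = ((3:ℕ):ℂ) + 1), Complex.Gamma_nat_eq_factorial]
    norm_num [Nat.factorial]
  have hG5 : Complex.Gamma (u + 2 + d) = 24 := by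
    rw [(by rw [hu, hd]; ring : u + 2 + d = ((4:ℕ):ℂ) + 1), Complex.Gamma_nat_eq_factorial]
    norm_num [Nat.factorial]
  have hGu1 : Complex.Gamma (u + 1) = u * Complex.Gamma u := Complex.Gamma_add_one u hune
  have hGu2 : Complex.Gamma (u + 2) = (u+1) * (u * Complex.Gamma u) := by
    rw [(by ring : u + 2 = (u + 1) + 1), Complex.Gamma_add_one _ hu1ne, hGu1]
  rw [hB u hu0 (by rw [hG3]; norm_num), hB (u+1) hu1 (by rw [hG4]; norm_num),
      hB (u+2) hu2 (by rw [hG5]; norm_num), hG3, hG4, hG5, hGu1, hGu2]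
  have hΓΓ : Complex.Gamma u * Complex.Gamma d
      = (Real.pi : ℂ) * (1 + ξ^2) / (4 * Real.cosh (Real.pi * ξ / 2)) := gamma_combo ξ
  have hcosh : (Real.cosh (Real.pi * ξ / 2) : ℂ) ≠ 0 :=
    Complex.ofReal_ne_zero.mpr (Real.cosh_pos _).ne'
  have hquad : u^2 - 3*u + 3 = (3 - (ξ:ℂ)^2)/4 := by
    rw [hu, hv]; linear_combination ((ξ:ℂ)^2/4) * Complex.I_sq
  linear_combination ((u^2-3*u+3)/6) * hΓΓ
    + ((Real.pi:ℂ)*(1+(ξ:ℂ)^2)/(24*((Real.cosh (Real.pi*ξ/2) : ℝ) : ℂ))) * hquad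

lemma pointwise_eq (ξ x : ℝ) :
    |(-(Real.exp (2*x) * 2) / (1 + Real.exp (2*x))^2)| •
      ((12:ℂ) * ((((1 + Real.exp (2*x))⁻¹ : ℝ):ℂ)^((3:ℂ)/2 + (ξ:ℂ)*Complex.I/2 - 1)
        * (1 - (((1 + Real.exp (2*x))⁻¹ : ℝ):ℂ))^((3:ℂ)/2 - (ξ:ℂ)*Complex.I/2 - 1)
        * (1 - 2*(((1 + Real.exp (2*x))⁻¹ : ℝ):ℂ))^2))
    = Complex.exp (-(↑x * ↑ξ) * Complex.I) * ((3 * (1 / Real.cosh x)^3 * Real.tanh x ^ 2 : ℝ):ℂ) := by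
  have ht : (0:ℝ) < Real.exp x := Real.exp_pos x
  set t : ℝ := Real.exp x with htdef
  have hE : Real.exp (2*x) = t^2 := by rw [two_mul, Real.exp_add]; ring
  have h1t : (0:ℝ) < 1 + t^2 := by positivity
  set y : ℝ := (1 + Real.exp (2*x))⁻¹ with hydef
  have hyval : y = (1 + t^2)⁻¹ := by rw [hydef, hE]
  have hy : 0 < y := by rw [hyval]; positivity
  have h1y : 1 - y = t^2/(1+t^2) := by rw [hyval]; field_simp; ring
  have h1ypos : 0 < 1 - y := by rw [h1y]; positivity
  set v : ℂ := (ξ:ℂ)*Complex.I/2 with hv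
  -- absolute value of the derivative
  have habs : |(-(Real.exp (2*x) * 2) / (1 + Real.exp (2*x))^2)| = 2*t^2/(1+t^2)^2 := by
    rw [hE, abs_div, abs_neg, _root_.abs_of_nonneg (by positivity : (0:ℝ) ≤ t^2*2),
      _root_.abs_of_nonneg (by positivity : (0:ℝ) ≤ (1+t^2)^2)]
    ring
  -- tanh
  have hcosh_eq : Real.cosh x = (1+t^2)/(2*t) := by
    rw [Real.cosh_eq, Real.exp_neg, ← htdef]; field_simp; ring
  have htanh : 1 - 2*y = Real.tanh x := by
    rw [Real.tanh_eq_sinh_div_cosh, Real.sinh_eq, Real.exp_neg, ← htdef, hcosh_eq, hyval]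
    field_simp
    ring
  -- exponent splitting
  have hyc : ((y:ℝ):ℂ) ≠ 0 := Complex.ofReal_ne_zero.mpr hy.ne'
  have h1yc : ((1 - y:ℝ):ℂ) ≠ 0 := Complex.ofReal_ne_zero.mpr h1ypos.ne'
  have hE1 : (3:ℂ)/2 + v - 1 = (1:ℂ)/2 + v := by ring
  have hE2 : (3:ℂ)/2 - v - 1 = (1:ℂ)/2 + (-v) := by ring
  have hcast1 : (1 : ℂ) - ((y:ℝ):ℂ) = ((1 - y : ℝ):ℂ) := by push_cast; ring
  have hcast2 : (1 : ℂ) - 2*((y:ℝ):ℂ) = ((Real.tanh x : ℝ):ℂ) := by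
    rw [← htanh]; push_cast; ring
  have hyv : ((y:ℝ):ℂ)^v = Complex.exp ((Real.log y : ℝ) * v) := by
    rw [Complex.cpow_def_of_ne_zero hyc, Complex.ofReal_log hy.le]
  have h1yv : ((1-y:ℝ):ℂ)^(-v) = Complex.exp ((Real.log (1-y) : ℝ) * (-v)) := by
    rw [Complex.cpow_def_of_ne_zero h1yc, Complex.ofReal_log h1ypos.le]
  have hyhalf : ((y:ℝ):ℂ)^((1:ℂ)/2) = ((y ^ ((1:ℝ)/2) : ℝ):ℂ) := by
    rw [Complex.ofReal_cpow hy.le]; norm_num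
  have h1yhalf : ((1-y:ℝ):ℂ)^((1:ℂ)/2) = (((1-y) ^ ((1:ℝ)/2) : ℝ):ℂ) := by
    rw [Complex.ofReal_cpow h1ypos.le]; norm_num
  -- the combined exponential
  have hexp : Complex.exp ((Real.log y : ℝ) * v) * Complex.exp ((Real.log (1-y) : ℝ) * (-v))
      = Complex.exp (-(↑x * ↑ξ) * Complex.I) := by
    rw [← Complex.exp_add]
    congr 1
    have hlog : Real.log y - Real.log (1-y) = -(2*x) := by
      rw [h1y, hyval, Real.log_inv, Real.log_div (by positivity) (by positivity),
        (by ring : t^2 = t*t), Real.log_mul ht.ne' ht.ne', htdef, Real.log_exp]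
      ring
    have : ((Real.log y : ℝ):ℂ) * v + ((Real.log (1-y) : ℝ):ℂ) * (-v)
        = ((Real.log y - Real.log (1-y) : ℝ):ℂ) * v := by push_cast; ring
    rw [this, hlog, hv]
    push_cast
    ring
  -- the real product
  have hhalfprod : y ^ ((1:ℝ)/2) * (1-y) ^ ((1:ℝ)/2) = t/(1+t^2) := by
    rw [← Real.mul_rpow hy.le h1ypos.le,
      (by rw [h1y, hyval]; field_simp : y * (1-y) = (t/(1+t^2))^2),
      ← Real.rpow_natCast (t/(1+t^2)) 2, ← Real.rpow_mul (by positivity)]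
    norm_num
  have hreal : (2*t^2/(1+t^2)^2) * (12 * (y ^ ((1:ℝ)/2) * (1-y) ^ ((1:ℝ)/2) * Real.tanh x ^ 2))
      = 3 * (1 / Real.cosh x)^3 * Real.tanh x ^ 2 := by
    rw [hhalfprod, hcosh_eq]
    field_simp
    ring
  -- assembly
  rw [real_smul, habs, hcast1, hcast2, hE1, hE2,
    Complex.cpow_add _ _ hyc, Complex.cpow_add _ _ h1yc, hyv, h1yv, hyhalf, h1yhalf]
  rw [show ((2*t^2/(1+t^2)^2 : ℝ):ℂ) * (12 * (((y ^ ((1:ℝ)/2) : ℝ):ℂ) * Complex.exp ((Real.log y : ℝ) * v)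
      * ((((1-y) ^ ((1:ℝ)/2) : ℝ):ℂ) * Complex.exp ((Real.log (1-y) : ℝ) * (-v)))
      * ((Real.tanh x : ℝ):ℂ)^2))
    = (Complex.exp ((Real.log y : ℝ) * v) * Complex.exp ((Real.log (1-y) : ℝ) * (-v)))
      * (((2*t^2/(1+t^2)^2) * (12 * (y ^ ((1:ℝ)/2) * (1-y) ^ ((1:ℝ)/2) * Real.tanh x ^ 2)) : ℝ):ℂ)
    from by push_cast; ring]
  rw [hexp, hreal]

lemma subst_eq (ξ : ℝ) :
    (∫ x : ℝ, Complex.exp (-(↑x * ↑ξ) * Complex.I)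
        * ((3 * (1 / Real.cosh x)^3 * Real.tanh x ^ 2 : ℝ):ℂ))
    = ∫ y in (0:ℝ)..1, (12:ℂ) * (((y:ℝ):ℂ)^((3:ℂ)/2 + (ξ:ℂ)*Complex.I/2 - 1)
        * (1 - ((y:ℝ):ℂ))^((3:ℂ)/2 - (ξ:ℂ)*Complex.I/2 - 1)
        * (1 - 2*((y:ℝ):ℂ))^2) := by
  set g : ℝ → ℂ := fun y => (12:ℂ) * (((y:ℝ):ℂ)^((3:ℂ)/2 + (ξ:ℂ)*Complex.I/2 - 1)
        * (1 - ((y:ℝ):ℂ))^((3:ℂ)/2 - (ξ:ℂ)*Complex.I/2 - 1)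
        * (1 - 2*((y:ℝ):ℂ))^2) with hg
  set φ : ℝ → ℝ := fun x => (1 + Real.exp (2*x))⁻¹ with hφ
  set φ' : ℝ → ℝ := fun x => -(Real.exp (2*x) * 2) / (1 + Real.exp (2*x))^2 with hφ'
  have hne : ∀ x : ℝ, 1 + Real.exp (2*x) ≠ 0 := fun x => by positivity
  have hderiv : ∀ x : ℝ, HasDerivAt φ (φ' x) x := by
    intro x
    have h1 : HasDerivAt (fun x : ℝ => 2*x) 2 x := by
      simpa using (hasDerivAt_id x).const_mul (2:ℝ)
    have h2 : HasDerivAt (fun x : ℝ => Real.exp (2*x)) (Real.exp (2*x) * 2) x := h1.exp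
    have h3 : HasDerivAt (fun x : ℝ => 1 + Real.exp (2*x)) (Real.exp (2*x) * 2) x :=
      h2.const_add 1
    exact h3.inv (hne x)
  have hinj : Set.InjOn φ Set.univ := by
    intro a _ b _ hab
    have h1 : 1 + Real.exp (2*a) = 1 + Real.exp (2*b) := inv_injective hab
    have h2 : Real.exp (2*a) = Real.exp (2*b) := by linarith
    have h3 := Real.exp_injective h2
    linarith
  have himg : φ '' Set.univ = Set.Ioo 0 1 := by
    rw [Set.image_univ]
    ext z
    simp only [Set.mem_range, Set.mem_Ioo]
    constructor
    · rintro ⟨x, rfl⟩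
      refine ⟨by positivity, ?_⟩
      rw [hφ]
      have : (1:ℝ) < 1 + Real.exp (2*x) := by linarith [Real.exp_pos (2*x)]
      exact inv_lt_one_of_one_lt₀ this
    · rintro ⟨h0, h1⟩
      refine ⟨Real.log ((1-z)/z)/2, ?_⟩
      rw [hφ]
      simp only
      rw [(by ring : 2*(Real.log ((1-z)/z)/2) = Real.log ((1-z)/z)),
        Real.exp_log (div_pos (by linarith) h0)]
      field_simp
      ring
  have hsub := integral_image_eq_integral_abs_deriv_smul MeasurableSet.univ
    (fun x _ => (hderiv x).hasDerivWithinAt) hinj g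
  rw [himg] at hsub
  have hIoo : (∫ y in Set.Ioo (0:ℝ) 1, g y) = ∫ y in (0:ℝ)..1, g y := by
    rw [intervalIntegral.integral_of_le zero_le_one, integral_Ioc_eq_integral_Ioo]
  rw [← hIoo, hsub, setIntegral_univ]
  exact integral_congr_ae (Filter.Eventually.of_forall fun x => (pointwise_eq ξ x).symm)

lemma key_integral (ξ : ℝ) :
    (∫ x : ℝ, Complex.exp (-(↑x * ↑ξ) * Complex.I)
        * ((3 * (1 / Real.cosh x)^3 * Real.tanh x ^ 2 : ℝ):ℂ))
      = (Real.pi : ℂ) * (3 - ξ^2) * (1 + ξ^2) / (8 * Real.cosh (Real.pi * ξ / 2)) := by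
  rw [subst_eq ξ, intervalIntegral.integral_const_mul, beta_eval ξ]
  have hcosh : (Real.cosh (Real.pi * ξ / 2) : ℂ) ≠ 0 :=
    Complex.ofReal_ne_zero.mpr (Real.cosh_pos _).ne'
  field_simp
  ring

/-- With the convention `F[g](ξ) = (2π)^{-1/2} ∫ e^{-ixξ} g(x) dx`, the Fourier
transform of `α₁(x) = 3 sech(x)³ tanh(x)²` equals
`-(1/8) √(π/2) (ξ²-3)(ξ²+1) sech(πξ/2)`; in particular it vanishes at `ξ = ±√3`. -/
theorem fourier_alpha1 :
    (∀ ξ : ℝ,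
        (↑(Real.sqrt (2 * Real.pi)))⁻¹ *
            ∫ x : ℝ, Complex.exp (-(↑x * ↑ξ) * Complex.I) *
              ((3 * (1 / Real.cosh x) ^ 3 * Real.tanh x ^ 2 : ℝ) : ℂ)
          = ((-(1 / 8) * Real.sqrt (Real.pi / 2) * (ξ ^ 2 - 3) * (ξ ^ 2 + 1)
              * (1 / Real.cosh (Real.pi * ξ / 2)) : ℝ) : ℂ)) ∧
      ((↑(Real.sqrt (2 * Real.pi)))⁻¹ *
          ∫ x : ℝ, Complex.exp (-(↑x * ↑(Real.sqrt 3)) * Complex.I) *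
            ((3 * (1 / Real.cosh x) ^ 3 * Real.tanh x ^ 2 : ℝ) : ℂ) = 0) ∧
      ((↑(Real.sqrt (2 * Real.pi)))⁻¹ *
          ∫ x : ℝ, Complex.exp (-(↑x * ↑(-Real.sqrt 3)) * Complex.I) *
            ((3 * (1 / Real.cosh x) ^ 3 * Real.tanh x ^ 2 : ℝ) : ℂ) = 0) := by
  have hmain : ∀ ξ : ℝ,
      (↑(Real.sqrt (2 * Real.pi)))⁻¹ *
          ∫ x : ℝ, Complex.exp (-(↑x * ↑ξ) * Complex.I) *
            ((3 * (1 / Real.cosh x) ^ 3 * Real.tanh x ^ 2 : ℝ) : ℂ)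
        = ((-(1 / 8) * Real.sqrt (Real.pi / 2) * (ξ ^ 2 - 3) * (ξ ^ 2 + 1)
            * (1 / Real.cosh (Real.pi * ξ / 2)) : ℝ) : ℂ) := by
    intro ξ
    rw [key_integral ξ]
    have hC : Real.cosh (Real.pi * ξ / 2) ≠ 0 := (Real.cosh_pos _).ne'
    have hs : (0:ℝ) < Real.sqrt (2 * Real.pi) := Real.sqrt_pos.mpr (by positivity)
    have hprod : Real.sqrt (Real.pi / 2) * Real.sqrt (2 * Real.pi) = Real.pi := by
      rw [← Real.sqrt_mul (by positivity) (2 * Real.pi),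
        (by field_simp : Real.pi / 2 * (2 * Real.pi) = Real.pi ^ 2),
        Real.sqrt_sq Real.pi_pos.le]
    have : ((Real.sqrt (2 * Real.pi) : ℝ) : ℂ)⁻¹
        * ((Real.pi : ℂ) * (3 - ξ^2) * (1 + ξ^2) / (8 * Real.cosh (Real.pi * ξ / 2)))
        = (((Real.sqrt (2 * Real.pi))⁻¹
            * (Real.pi * (3 - ξ^2) * (1 + ξ^2) / (8 * Real.cosh (Real.pi * ξ / 2))) : ℝ) : ℂ) := by
      push_cast
      ring
    rw [this]
    norm_cast
    set C := Real.cosh (Real.pi * ξ / 2) with hCdef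
    set S2 := Real.sqrt (2 * Real.pi) with hS2def
    set SP := Real.sqrt (Real.pi / 2) with hSPdef
    rw [← hprod]
    field_simp
    ring
  refine ⟨hmain, ?_, ?_⟩
  · rw [hmain (Real.sqrt 3)]
    have h3 : Real.sqrt 3 ^ 2 = 3 := Real.sq_sqrt (by norm_num)
    norm_cast
    rw [h3]
    norm_num
  · rw [hmain (-Real.sqrt 3)]
    have h3 : (-Real.sqrt 3) ^ 2 = 3 := by
      rw [neg_pow]; simp [Real.sq_sqrt (show (0:ℝ) ≤ 3 by norm_num)]
    norm_cast
    rw [h3]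
    norm_num
end

section
/- The function α₁(ξ) := −(1/8)·√(π/2)·(ξ²−3)(ξ²+1)·sech(πξ/2) vanishes at ξ = √3 and ξ = −√3, and the function ξ ↦ α₁(ξ)/(2 − √(1+ξ²)) extends to a bounded smooth function on ℝ (the singularity of 2 − ⟨ξ⟩ at ξ = ±√3 is removable). -/
/-- The function `α̂₁(ξ) = -(1/8) √(π/2) (ξ²-3)(ξ²+1) sech(πξ/2)` vanishes at
`ξ = ±√3`, and `ξ ↦ α̂₁(ξ) / (2 - ⟨ξ⟩)` extends to a bounded smooth function
on `ℝ` (the singularity at `ξ = ±√3` is removable). -/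
theorem alpha1_nonresonance_and_removable :
    (fun ξ : ℝ => -(1 / 8) * Real.sqrt (Real.pi / 2) * (ξ ^ 2 - 3) * (ξ ^ 2 + 1)
        * (1 / Real.cosh (Real.pi * ξ / 2))) (Real.sqrt 3) = 0 ∧
    (fun ξ : ℝ => -(1 / 8) * Real.sqrt (Real.pi / 2) * (ξ ^ 2 - 3) * (ξ ^ 2 + 1)
        * (1 / Real.cosh (Real.pi * ξ / 2))) (-Real.sqrt 3) = 0 ∧
    ∃ g : ℝ → ℝ, ContDiff ℝ (⊤ : ℕ∞) g ∧ (∃ C : ℝ, ∀ ξ : ℝ, |g ξ| ≤ C) ∧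
      ∀ ξ : ℝ, 2 - Real.sqrt (1 + ξ ^ 2) ≠ 0 →
        g ξ = (-(1 / 8) * Real.sqrt (Real.pi / 2) * (ξ ^ 2 - 3) * (ξ ^ 2 + 1)
            * (1 / Real.cosh (Real.pi * ξ / 2))) / (2 - Real.sqrt (1 + ξ ^ 2)) := by
  have h3 : (Real.sqrt 3) ^ 2 = 3 := Real.sq_sqrt (by norm_num)
  refine ⟨by simp [h3], by simp [h3], ?_⟩
  set A := Real.sqrt (Real.pi / 2) with hA
  have hA0 : 0 ≤ A := Real.sqrt_nonneg _
  refine ⟨fun ξ => (1 / 8) * A * (ξ ^ 2 + 1) * (2 + Real.sqrt (1 + ξ ^ 2))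
      / Real.cosh (Real.pi * ξ / 2), ?_, ?_, ?_⟩
  · have hsq : ContDiff ℝ (⊤ : ℕ∞) fun ξ : ℝ => Real.sqrt (1 + ξ ^ 2) := by
      apply ContDiff.sqrt
      · exact (contDiff_const.add (contDiff_id.pow 2))
      · intro x; positivity
    apply ContDiff.div
    · exact ((contDiff_const.mul ((contDiff_id.pow 2).add contDiff_const)).mul
        (contDiff_const.add hsq))
    · exact Real.contDiff_cosh.comp ((contDiff_const.mul contDiff_id).div_const 2)
    · intro x; exact (Real.cosh_pos _).ne'
  · refine ⟨12 * A, fun ξ => ?_⟩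
    have hc : 0 < Real.cosh (Real.pi * ξ / 2) := Real.cosh_pos _
    have hs : Real.sqrt (1 + ξ ^ 2) ≤ 1 + ξ ^ 2 := by
      nlinarith [Real.sq_sqrt (by positivity : (0:ℝ) ≤ 1 + ξ ^ 2),
        Real.sqrt_nonneg (1 + ξ ^ 2)]
    have hs0 : 0 ≤ Real.sqrt (1 + ξ ^ 2) := Real.sqrt_nonneg _
    -- lower bound on cosh via exp
    have hcosh : 1 / 2 + ξ ^ 4 / 10 ≤ Real.cosh (Real.pi * ξ / 2) := by
      have habs : Real.cosh (Real.pi * ξ / 2) = Real.cosh (Real.pi * |ξ| / 2) := by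
        rcases abs_cases ξ with ⟨h, _⟩ | ⟨h, _⟩
        · rw [h]
        · rw [h]; rw [show Real.pi * -ξ / 2 = -(Real.pi * ξ / 2) by ring, Real.cosh_neg]
      rw [habs]
      have hx0 : 0 ≤ Real.pi * |ξ| / 2 := by positivity
      have hexp := Real.sum_le_exp_of_nonneg hx0 5
      have hcosh_ge : Real.exp (Real.pi * |ξ| / 2) / 2 ≤ Real.cosh (Real.pi * |ξ| / 2) := by
        rw [Real.cosh_eq]
        have := (Real.exp_pos (-(Real.pi * |ξ| / 2))).le
        linarith
      have hsum : 1 + (Real.pi * |ξ| / 2) ^ 4 / 24 ≤ Real.exp (Real.pi * |ξ| / 2) := by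
        refine le_trans ?_ hexp
        rw [Finset.sum_range_succ, Finset.sum_range_succ, Finset.sum_range_succ,
          Finset.sum_range_succ, Finset.sum_range_succ]
        simp [Nat.factorial]
        have h1 : 0 ≤ Real.pi * |ξ| / 2 := hx0
        nlinarith [pow_nonneg h1 2, pow_nonneg h1 3]
      have hpi : (3:ℝ) ≤ Real.pi := Real.pi_gt_three.le
      have h4 : ξ ^ 4 / 5 ≤ (Real.pi * |ξ| / 2) ^ 4 / 24 := by
        have habs4 : |ξ| ^ 4 = ξ ^ 4 := by
          rw [show (4:ℕ) = 2 * 2 by rfl, pow_mul, pow_mul, sq_abs]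
        have : (Real.pi * |ξ| / 2) ^ 4 = Real.pi ^ 4 * |ξ| ^ 4 / 16 := by ring
        rw [this, habs4]
        have hpi4 : (81:ℝ) ≤ Real.pi ^ 4 := by
          have := pow_le_pow_left₀ (by norm_num : (0:ℝ) ≤ 3) hpi 4
          norm_num at this; linarith
        nlinarith [pow_nonneg (abs_nonneg ξ) 4, habs4, sq_nonneg (ξ^2)]
      linarith
    rw [abs_div, abs_of_pos hc, div_le_iff₀ hc]
    have hnum : |1 / 8 * A * (ξ ^ 2 + 1) * (2 + Real.sqrt (1 + ξ ^ 2))|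
        = 1 / 8 * A * (ξ ^ 2 + 1) * (2 + Real.sqrt (1 + ξ ^ 2)) := by
      apply abs_of_nonneg; positivity
    rw [hnum]
    nlinarith [mul_le_mul_of_nonneg_left hcosh (by positivity : (0:ℝ) ≤ 12 * A),
      mul_nonneg hA0 (sq_nonneg (ξ^2 - 1)), mul_nonneg hA0 (sq_nonneg ξ),
      mul_nonneg hA0 (sq_nonneg (ξ^2)), hs, hs0,
      mul_le_mul_of_nonneg_left hs (by positivity : (0:ℝ) ≤ 1/8 * A * (ξ^2+1))]
  · intro ξ hξ
    have hsq : Real.sqrt (1 + ξ ^ 2) ^ 2 = 1 + ξ ^ 2 := Real.sq_sqrt (by positivity)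
    have hc : Real.cosh (Real.pi * ξ / 2) ≠ 0 := (Real.cosh_pos _).ne'
    field_simp
    linear_combination (-A) * hsq
end

section
/- The convolution of x ↦ sech(πx/2) with itself satisfies (sech(π·/2) ∗ sech(π·/2))(ξ) = 2ξ/sinh(πξ/2) for all real ξ (with the value 4/π at ξ = 0). -/
open Real MeasureTheory Filter Set Topology

namespace SechConvAux

/-- `log (cosh x) - x → -log 2` as `x → ∞`. -/
lemma tendsto_log_cosh_sub :
    Tendsto (fun x : ℝ => Real.log (Real.cosh x) - x) atTop (𝓝 (-Real.log 2)) := by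
  have hident : ∀ x : ℝ, Real.log (Real.cosh x) - x
      = Real.log ((1 + Real.exp (-(2 * x))) / 2) := by
    intro x
    have h1 : Real.log (Real.cosh x) - x = Real.log (Real.cosh x / Real.exp x) := by
      rw [Real.log_div (Real.cosh_pos (x := x)).ne' (Real.exp_ne_zero x), Real.log_exp]
    rw [h1]
    congr 1
    have hE := (Real.exp_pos x).ne'
    rw [Real.cosh_eq, Real.exp_neg,
      show Real.exp (-(2 * x)) = (Real.exp x)⁻¹ * (Real.exp x)⁻¹ by
        rw [← Real.exp_neg, ← Real.exp_add]; ring_nf]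
    rw [div_div]
    rw [div_eq_iff (by positivity : (2:ℝ) * Real.exp x ≠ 0)]
    field_simp
  simp only [hident]
  have h0 : Tendsto (fun x : ℝ => Real.exp (-(2 * x))) atTop (𝓝 0) := by
    apply Real.tendsto_exp_atBot.comp
    apply tendsto_neg_atBot_iff.mpr
    exact Tendsto.const_mul_atTop (by norm_num : (0:ℝ) < 2) tendsto_id
  have h1 : Tendsto (fun x : ℝ => (1 + Real.exp (-(2 * x))) / 2) atTop (𝓝 ((1 + 0) / 2)) :=
    Tendsto.div_const (Tendsto.const_add _ h0) 2
  have h2 : Tendsto Real.log (𝓝 ((1 + 0)/2)) (𝓝 (Real.log ((1+0)/2))) :=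
    (Real.continuousAt_log (by norm_num)).tendsto
  have h3 := h2.comp h1
  have hv : Real.log ((1 + 0)/2) = -Real.log 2 := by
    rw [show ((1:ℝ) + 0)/2 = 2⁻¹ by norm_num, Real.log_inv]
  rw [hv] at h3
  exact h3

/-- Antiderivative of `sinh c / (cosh c + cosh u)`. -/
noncomputable def Fc (c u : ℝ) : ℝ :=
  Real.log (Real.cosh ((u + c) / 2)) - Real.log (Real.cosh ((u - c) / 2))

lemma hasDerivAt_Fc (c u : ℝ) :
    HasDerivAt (Fc c) (Real.sinh c / (Real.cosh c + Real.cosh u)) u := by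
  have h1 : HasDerivAt (fun u : ℝ => (u + c) / 2) (1 / 2) u := by
    simpa using ((hasDerivAt_id u).add_const c).div_const 2
  have h2 : HasDerivAt (fun u : ℝ => (u - c) / 2) (1 / 2) u := by
    simpa using ((hasDerivAt_id u).sub_const c).div_const 2
  set a := (u + c) / 2 with ha
  set b := (u - c) / 2 with hb
  have da : HasDerivAt (fun u : ℝ => Real.log (Real.cosh ((u + c) / 2)))
      ((Real.cosh a)⁻¹ * (Real.sinh a * (1 / 2))) u := by
    have := (Real.hasDerivAt_log (Real.cosh_pos (x := a)).ne').comp u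
      ((Real.hasDerivAt_cosh a).comp u h1)
    exact this
  have db : HasDerivAt (fun u : ℝ => Real.log (Real.cosh ((u - c) / 2)))
      ((Real.cosh b)⁻¹ * (Real.sinh b * (1 / 2))) u := by
    have := (Real.hasDerivAt_log (Real.cosh_pos (x := b)).ne').comp u
      ((Real.hasDerivAt_cosh b).comp u h2)
    exact this
  have key : (Real.cosh a)⁻¹ * (Real.sinh a * (1 / 2)) - (Real.cosh b)⁻¹ * (Real.sinh b * (1 / 2))
      = Real.sinh c / (Real.cosh c + Real.cosh u) := by
    have hc : c = a - b := by rw [ha, hb]; ring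
    have hu : u = a + b := by rw [ha, hb]; ring
    rw [hc, hu, Real.sinh_sub, Real.cosh_sub, Real.cosh_add]
    have hA := (Real.cosh_pos (x := a)).ne'
    have hB := (Real.cosh_pos (x := b)).ne'
    have hden : Real.cosh a * Real.cosh b - Real.sinh a * Real.sinh b
        + (Real.cosh a * Real.cosh b + Real.sinh a * Real.sinh b)
        = 2 * (Real.cosh a * Real.cosh b) := by ring
    rw [hden]
    field_simp
  exact key ▸ (da.sub db)

lemma tendsto_Fc (c : ℝ) : Tendsto (Fc c) atTop (𝓝 c) := by
  have t1 : Tendsto (fun u : ℝ => (u + c) / 2) atTop atTop :=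
    (tendsto_atTop_add_const_right atTop c tendsto_id).atTop_div_const (by norm_num)
  have t2 : Tendsto (fun u : ℝ => (u - c) / 2) atTop atTop :=
    (tendsto_atTop_add_const_right atTop (-c) tendsto_id).atTop_div_const (by norm_num)
  have A := tendsto_log_cosh_sub.comp t1
  have B := tendsto_log_cosh_sub.comp t2
  have C := (A.sub B).add_const c
  have hfun : (fun u : ℝ =>
      ((fun x : ℝ => Real.log (Real.cosh x) - x) ∘ fun u : ℝ => (u + c) / 2) u
        - ((fun x : ℝ => Real.log (Real.cosh x) - x) ∘ fun u : ℝ => (u - c) / 2) u + c)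
      = Fc c := by
    funext u
    simp only [Function.comp_apply, Fc]
    ring
  rw [hfun] at C
  simpa using C

lemma Fc_zero (c : ℝ) : Fc c 0 = 0 := by
  simp [Fc, Real.cosh_neg, zero_sub, zero_add, neg_div]

lemma core_pos {c : ℝ} (hc : 0 < c) :
    ∫ u : ℝ, Real.sinh c / (Real.cosh c + Real.cosh u) = 2 * c := by
  have hs := Real.sinh_pos_iff.mpr hc
  have hIoi : ∫ u in Ioi (0:ℝ), Real.sinh c / (Real.cosh c + Real.cosh u) = c - Fc c 0 :=
    integral_Ioi_of_hasDerivAt_of_nonneg' (fun x _ => hasDerivAt_Fc c x)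
      (fun x _ => by positivity) (tendsto_Fc c)
  have h2 := integral_comp_abs (f := fun x : ℝ => Real.sinh c / (Real.cosh c + Real.cosh x))
  simp only [Real.cosh_abs] at h2
  rw [h2, hIoi, Fc_zero]
  ring

lemma core_ne {c : ℝ} (hc : c ≠ 0) :
    ∫ u : ℝ, 1 / (Real.cosh c + Real.cosh u) = 2 * c / Real.sinh c := by
  rcases hc.lt_or_gt with h | h
  · have h' : 0 < -c := by linarith
    have hs : Real.sinh (-c) ≠ 0 := (Real.sinh_pos_iff.mpr h').ne'
    have := core_pos h'
    rw [eq_div_iff (by simpa [Real.sinh_neg] using hs), mul_comm, ← integral_const_mul]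
    calc (∫ u : ℝ, Real.sinh c * (1 / (Real.cosh c + Real.cosh u)))
        = -∫ u : ℝ, Real.sinh (-c) / (Real.cosh (-c) + Real.cosh u) := by
          rw [← integral_neg]
          congr 1
          funext u
          rw [Real.sinh_neg, Real.cosh_neg]
          ring
      _ = 2 * c := by rw [this]; ring
  · have hs : Real.sinh c ≠ 0 := (Real.sinh_pos_iff.mpr h).ne'
    rw [eq_div_iff hs, mul_comm, ← integral_const_mul]
    calc (∫ u : ℝ, Real.sinh c * (1 / (Real.cosh c + Real.cosh u)))
        = ∫ u : ℝ, Real.sinh c / (Real.cosh c + Real.cosh u) := by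
          congr 1; funext u; ring
      _ = 2 * c := core_pos h

/-- Antiderivative for the `c = 0` case. -/
lemma core_zero : ∫ u : ℝ, 1 / (1 + Real.cosh u) = 2 := by
  have hderiv : ∀ x : ℝ, HasDerivAt (fun u : ℝ => Real.sinh u / (1 + Real.cosh u))
      (1 / (1 + Real.cosh x)) x := by
    intro x
    have hden : (1 : ℝ) + Real.cosh x ≠ 0 := by positivity
    have h := (Real.hasDerivAt_sinh x).div
      ((hasDerivAt_const x (1:ℝ)).add (Real.hasDerivAt_cosh x)) hden
    have hval : (Real.cosh x * (1 + Real.cosh x) - Real.sinh x * (0 + Real.sinh x))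
        / (1 + Real.cosh x) ^ 2 = 1 / (1 + Real.cosh x) := by
      have hp : Real.cosh x ^ 2 - Real.sinh x ^ 2 = 1 := Real.cosh_sq_sub_sinh_sq x
      rw [div_eq_div_iff (by positivity) hden]
      nlinarith [hp]
    rw [← hval]; exact h
  have hlim : Tendsto (fun u : ℝ => Real.sinh u / (1 + Real.cosh u)) atTop (𝓝 1) := by
    have hident : ∀ u : ℝ, Real.sinh u / (1 + Real.cosh u) = 1 - 2 / (Real.exp u + 1) := by
      intro u
      have hE := (Real.exp_pos u)
      rw [Real.sinh_eq, Real.cosh_eq, Real.exp_neg]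
      rw [div_eq_iff (by positivity : (1:ℝ) + (Real.exp u + (Real.exp u)⁻¹)/2 ≠ 0)]
      field_simp
      ring
    simp only [hident]
    have h1 : Tendsto (fun u : ℝ => Real.exp u + 1) atTop atTop :=
      tendsto_atTop_add_const_right atTop 1 Real.tendsto_exp_atTop
    have h2 : Tendsto (fun u : ℝ => 2 / (Real.exp u + 1)) atTop (𝓝 0) :=
      Tendsto.div_atTop tendsto_const_nhds h1
    simpa using (tendsto_const_nhds (x := (1:ℝ)) (f := atTop)).sub h2
  have hIoi : ∫ u in Ioi (0:ℝ), 1 / (1 + Real.cosh u) = 1 - Real.sinh 0 / (1 + Real.cosh 0) :=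
    integral_Ioi_of_hasDerivAt_of_nonneg' (fun x _ => hderiv x)
      (fun x _ => by positivity) hlim
  have h2 := integral_comp_abs (f := fun x : ℝ => 1 / (1 + Real.cosh x))
  simp only [Real.cosh_abs] at h2
  rw [h2, hIoi]
  simp

/-- The change of variables reducing the convolution to the core integral. -/
lemma conv_transform (ξ : ℝ) :
    (∫ η : ℝ, (1 / Real.cosh (Real.pi * (ξ - η) / 2)) * (1 / Real.cosh (Real.pi * η / 2)))
      = Real.pi⁻¹ * (2 * ∫ u : ℝ, 1 / (Real.cosh (Real.pi * ξ / 2) + Real.cosh u)) := by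
  set g : ℝ → ℝ := fun u => 2 * (1 / (Real.cosh (Real.pi * ξ / 2) + Real.cosh u)) with hg
  have key : ∀ η : ℝ, (1 / Real.cosh (Real.pi * (ξ - η) / 2)) * (1 / Real.cosh (Real.pi * η / 2))
      = g (-Real.pi * (η + -(ξ / 2))) := by
    intro η
    set A := Real.pi * (ξ - η) / 2 with hA
    set B := Real.pi * η / 2 with hB
    have e1 : Real.pi * ξ / 2 = A + B := by rw [hA, hB]; ring
    have e2 : -Real.pi * (η + -(ξ / 2)) = A - B := by rw [hA, hB]; ring
    rw [hg]
    simp only [e1, e2]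
    have hCA := (Real.cosh_pos (x := A)).ne'
    have hCB := (Real.cosh_pos (x := B)).ne'
    have hsum : Real.cosh (A + B) + Real.cosh (A - B) = 2 * (Real.cosh A * Real.cosh B) := by
      rw [Real.cosh_add, Real.cosh_sub]; ring
    rw [hsum]
    field_simp
  calc (∫ η : ℝ, (1 / Real.cosh (Real.pi * (ξ - η) / 2)) * (1 / Real.cosh (Real.pi * η / 2)))
      = ∫ η : ℝ, (fun x : ℝ => g (-Real.pi * x)) (η + -(ξ / 2)) := by
        congr 1; funext η; exact key η
    _ = ∫ x : ℝ, g (-Real.pi * x) := integral_add_right_eq_self (fun x : ℝ => g (-Real.pi * x)) (-(ξ / 2))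
    _ = |(-Real.pi)⁻¹| • ∫ u : ℝ, g u := Measure.integral_comp_mul_left g (-Real.pi)
    _ = Real.pi⁻¹ * ∫ u : ℝ, g u := by
        rw [abs_inv, abs_neg, abs_of_pos Real.pi_pos, smul_eq_mul]
    _ = Real.pi⁻¹ * (2 * ∫ u : ℝ, 1 / (Real.cosh (Real.pi * ξ / 2) + Real.cosh u)) := by
        rw [hg, integral_const_mul]

end SechConvAux

open SechConvAux in
/-- The self-convolution identity
`(sech(π·/2) ∗ sech(π·/2))(ξ) = 2ξ / sinh(πξ/2)` for `ξ ≠ 0`, with value `4/π`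
at `ξ = 0`. -/
theorem sech_self_convolution :
    (∀ ξ : ℝ, ξ ≠ 0 →
        (∫ η : ℝ, (1 / Real.cosh (Real.pi * (ξ - η) / 2)) *
            (1 / Real.cosh (Real.pi * η / 2)))
          = 2 * ξ / Real.sinh (Real.pi * ξ / 2)) ∧
      (∫ η : ℝ, (1 / Real.cosh (Real.pi * ((0:ℝ) - η) / 2)) *
          (1 / Real.cosh (Real.pi * η / 2))) = 4 / Real.pi := by
  constructor
  · intro ξ hξ
    have hc : Real.pi * ξ / 2 ≠ 0 :=
      div_ne_zero (mul_ne_zero Real.pi_ne_zero hξ) two_ne_zero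
    have hs : Real.sinh (Real.pi * ξ / 2) ≠ 0 := by
      simpa [Real.sinh_eq_zero] using hc
    rw [conv_transform ξ, core_ne hc]
    field_simp
  · rw [conv_transform 0]
    simp only [mul_zero, zero_div, Real.cosh_zero]
    rw [core_zero, eq_div_iff Real.pi_ne_zero]
    field_simp
    norm_num
end
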